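/- arXiv:1612.06288 — 9 statements merged into one kernel-verified Lean document; each statement's English description precedes it below -/
import Mathlib

section
/- If C is a closed subset of the nonnegative orthant in R^n, then the Minkowski sum of the convex hull of C and the nonnegative orthant, conv(C) + R^n_+, is a closed set. -/
/-!
Take `z` in the closure, `z = lim (yₖ + qₖ)` with `yₖ ∈ conv C` and `qₖ` in the orthant `K`.
By Carathéodory, `yₖ = ∑ tₖᵢ cₖᵢ` with a fixed number `n + 1` of terms. Every term `tₖᵢ cₖᵢ`
lies in `K` and is dominated by `yₖ + qₖ` in the order of `K`, so it is bounded even though `cₖᵢ`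
need not be. Along a subsequence `tₖᵢ → τᵢ` and `tₖᵢ cₖᵢ → ωᵢ`. If `τᵢ > 0` then
`ωᵢ / τᵢ ∈ C` since `C` is closed; if `τᵢ = 0` then `ωᵢ ∈ K` is absorbed into the orthant part.
The argument works for any closed convex cone `K` on which the norm is monotone.
-/

open Pointwise Filter Topology Module

theorem Fintype.sum_extend_zero {ι κ M : Type*} [Fintype ι] [Fintype κ] [AddCommMonoid M]
    {e : ι → κ} (he : Function.Injective e) (f : ι → M) :
    ∑ j, Function.extend e f 0 j = ∑ i, f i :=
  (Fintype.sum_of_injective e he f _ (fun j hj => Function.extend_apply' f (0 : κ → M) j hj)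
    fun i => (he.extend_apply f 0 i).symm).symm

section
variable {E : Type*} [NormedAddCommGroup E] [NormedSpace ℝ E]

theorem exists_fin_finrank_succ_of_mem_convexHull [FiniteDimensional ℝ E] {s : Set E} {x : E}
    (hx : x ∈ convexHull ℝ s) :
    ∃ (t : Fin (finrank ℝ E + 1) → ℝ) (c : Fin (finrank ℝ E + 1) → E),
      (∀ i, 0 ≤ t i) ∧ ∑ i, t i = 1 ∧ (∀ i, c i ∈ s) ∧ ∑ i, t i • c i = x := by
  obtain ⟨ι, _, z, w, hzs, hz, hw0, hw1, hwz⟩ := eq_pos_convex_span_of_mem_convexHull hx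
  have hcard : Fintype.card ι ≤ Fintype.card (Fin (finrank ℝ E + 1)) := by
    simpa using hz.card_le_finrank_succ.trans (Nat.succ_le_succ (Submodule.finrank_le _))
  obtain ⟨e⟩ := Function.Embedding.nonempty_of_card_le hcard
  obtain ⟨i₀⟩ : Nonempty ι := by
    by_contra h
    simp [not_nonempty_iff.mp h] at hw1
  refine ⟨Function.extend e w 0, Function.extend e z fun _ => z i₀,
    fun j => ?_, ?_, fun j => ?_, ?_⟩
  · rcases em (∃ i, e i = j) with ⟨i, rfl⟩ | hj
    · simpa [e.injective.extend_apply] using (hw0 i).le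
    · simp [Function.extend_apply' _ _ _ hj]
  · rw [Fintype.sum_extend_zero e.injective, hw1]
  · rcases em (∃ i, e i = j) with ⟨i, rfl⟩ | hj
    · simpa [e.injective.extend_apply] using hzs (Set.mem_range_self i)
    · simpa [Function.extend_apply' _ _ _ hj] using hzs (Set.mem_range_self i₀)
  · rw [← hwz, ← Fintype.sum_extend_zero e.injective]
    congr 1 with j
    rcases em (∃ i, e i = j) with ⟨i, rfl⟩ | hj
    · simp [e.injective.extend_apply]
    · simp [Function.extend_apply' _ _ _ hj]

variable {K : PointedCone ℝ E} {C : Set E}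

theorem exists_eq_smul_add_of_tendsto (hK : IsClosed (K : Set E)) (hC : IsClosed C)
    (hCK : C ⊆ K) {t : ℕ → ℝ} {c : ℕ → E} {τ : ℝ} {ω : E} (ht0 : ∀ k, 0 ≤ t k)
    (hc : ∀ k, c k ∈ C) (ht : Tendsto t atTop (𝓝 τ))
    (htc : Tendsto (fun k => t k • c k) atTop (𝓝 ω)) :
    ∃ p ∈ C, ∃ r ∈ K, ω = τ • p + r := by
  rcases eq_or_ne τ 0 with rfl | hτ
  · refine ⟨c 0, hc 0, ω, hK.mem_of_tendsto htc (Eventually.of_forall fun k => ?_), by simp⟩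
    exact K.smul_mem (ht0 k) (hCK (hc k))
  · have hlim : Tendsto (fun k => (t k)⁻¹ • (t k • c k)) atTop (𝓝 (τ⁻¹ • ω)) :=
      (ht.inv₀ hτ).smul htc
    have hc' : ∀ᶠ k in atTop, (t k)⁻¹ • (t k • c k) = c k := by
      filter_upwards [ht.eventually_ne hτ] with k hk
      exact inv_smul_smul₀ hk _
    refine ⟨τ⁻¹ • ω, hC.mem_of_tendsto (hlim.congr' hc') (Eventually.of_forall hc), 0, K.zero_mem,
      by rw [smul_inv_smul₀ hτ, add_zero]⟩

theorem mem_convexHull_add_of_tendsto {ι : Type*} [Fintype ι] (hK : IsClosed (K : Set E))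
    (hC : IsClosed C) (hCK : C ⊆ K) {t : ℕ → ι → ℝ} {c : ℕ → ι → E} {q : ℕ → E}
    {τ : ι → ℝ} {ω : ι → E} {z : E} (ht0 : ∀ k i, 0 ≤ t k i) (ht1 : ∀ k, ∑ i, t k i = 1)
    (hc : ∀ k i, c k i ∈ C) (hq : ∀ k, q k ∈ K) (ht : Tendsto t atTop (𝓝 τ))
    (htc : Tendsto (fun k i => t k i • c k i) atTop (𝓝 ω))
    (hz : Tendsto (fun k => ∑ i, t k i • c k i + q k) atTop (𝓝 z)) :
    z ∈ convexHull ℝ C + (K : Set E) := by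
  have hτi := tendsto_pi_nhds.1 ht
  have hωi := tendsto_pi_nhds.1 htc
  have hτ0 (i : ι) : 0 ≤ τ i := ge_of_tendsto (hτi i) (Eventually.of_forall fun k => ht0 k i)
  have hτ1 : ∑ i, τ i = 1 :=
    tendsto_nhds_unique (tendsto_finsetSum _ fun i _ => hτi i) (by simp [ht1])
  have hzq : z - ∑ i, ω i ∈ K := by
    have hqlim : Tendsto q atTop (𝓝 (z - ∑ i, ω i)) :=
      (hz.sub (tendsto_finsetSum _ fun i _ => hωi i)).congr fun k => add_sub_cancel_left _ _
    exact hK.mem_of_tendsto hqlim (Eventually.of_forall hq)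
  choose p hp r hr hω using fun i =>
    exists_eq_smul_add_of_tendsto hK hC hCK (ht0 · i) (hc · i) (hτi i) (hωi i)
  refine Set.mem_add.2 ⟨∑ i, τ i • p i,
    (convex_convexHull ℝ C).sum_mem (fun i _ => hτ0 i) hτ1 fun i _ => subset_convexHull ℝ C (hp i),
    ∑ i, r i + (z - ∑ i, ω i), K.add_mem (K.sum_mem fun i _ => hr i) hzq, ?_⟩
  simp only [hω, Finset.sum_add_distrib]
  abel

theorem norm_le_norm_sum_add (hKnorm : ∀ a ∈ K, ∀ b ∈ K, ‖a‖ ≤ ‖a + b‖) {ι : Type*} [Fintype ι]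
    {a : ι → E} (ha : ∀ i, a i ∈ K) {q : E} (hq : q ∈ K) (i : ι) : ‖a i‖ ≤ ‖∑ j, a j + q‖ := by
  classical
  rw [← Finset.add_sum_erase _ _ (Finset.mem_univ i), add_assoc]
  exact hKnorm _ (ha i) _ (K.add_mem (K.sum_mem fun j _ => ha j) hq)

theorem isClosed_convexHull_add_pointedCone [FiniteDimensional ℝ E] (hK : IsClosed (K : Set E))
    (hKnorm : ∀ a ∈ K, ∀ b ∈ K, ‖a‖ ≤ ‖a + b‖) (hC : IsClosed C) (hCK : C ⊆ K) :
    IsClosed (convexHull ℝ C + (K : Set E)) := by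
  refine IsSeqClosed.isClosed fun u z hu hz => ?_
  choose y hy q hq hu using fun k => Set.mem_add.1 (hu k)
  choose t c ht0 ht1 hc hy using fun k => exists_fin_finrank_succ_of_mem_convexHull (hy k)
  obtain ⟨M, hM⟩ := hz.norm.bddAbove_range
  have hbounded (k : ℕ) : (t k, fun i => t k i • c k i) ∈
      Set.univ.pi (fun _ => Set.Icc 0 1) ×ˢ Metric.closedBall 0 M := by
    refine ⟨fun i _ => ⟨ht0 k i, ?_⟩, ?_⟩
    · exact ht1 k ▸ Finset.single_le_sum (fun j _ => ht0 k j) (Finset.mem_univ i)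
    · have hterm (i) : ‖t k i • c k i‖ ≤ M := by
        refine (norm_le_norm_sum_add hKnorm (fun j => K.smul_mem (ht0 k j) (hCK (hc k j)))
          (hq k) i).trans ?_
        rw [hy, hu]
        exact hM (Set.mem_range_self k)
      exact mem_closedBall_zero_iff.2 <|
        (pi_norm_le_iff_of_nonneg ((norm_nonneg _).trans (hterm 0))).2 hterm
  obtain ⟨⟨τ, ω⟩, -, φ, hφ, hlim⟩ :=
    ((isCompact_univ_pi fun _ => isCompact_Icc).prod (isCompact_closedBall 0 M)).tendsto_subseq
      hbounded
  refine mem_convexHull_add_of_tendsto hK hC hCK (fun k => ht0 (φ k)) (fun k => ht1 (φ k))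
    (fun k => hc (φ k)) (fun k => hq (φ k)) hlim.fst_nhds hlim.snd_nhds ?_
  simpa only [hy, hu, Function.comp_def] using hz.comp hφ.tendsto_atTop

end

def orthant (n : ℕ) : PointedCone ℝ (EuclideanSpace ℝ (Fin n)) where
  carrier := {x | ∀ i, 0 ≤ x i}
  add_mem' ha hb i := add_nonneg (ha i) (hb i)
  zero_mem' _ := le_rfl
  smul_mem' c _ hx i := mul_nonneg c.2 (hx i)

theorem isClosed_orthant (n : ℕ) : IsClosed (orthant n : Set (EuclideanSpace ℝ (Fin n))) := by
  change IsClosed {x : EuclideanSpace ℝ (Fin n) | ∀ i, 0 ≤ x i}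
  rw [Set.ofPred_forall]
  exact isClosed_iInter fun i => isClosed_le continuous_const (EuclideanSpace.proj i).continuous

theorem norm_le_norm_add_of_mem_orthant {n : ℕ} {a b : EuclideanSpace ℝ (Fin n)}
    (ha : a ∈ orthant n) (hb : b ∈ orthant n) : ‖a‖ ≤ ‖a + b‖ := by
  rw [EuclideanSpace.norm_eq, EuclideanSpace.norm_eq]
  gcongr with i
  rw [PiLp.add_apply, Real.norm_of_nonneg (ha i), Real.norm_of_nonneg (add_nonneg (ha i) (hb i))]
  exact le_add_of_nonneg_right (hb i)

/-- If `C` is a closed subset of the nonnegative orthant in `ℝ^n`, then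
`conv(C) + ℝ^n_+` is closed. -/
theorem stmt0 (n : ℕ) (C : Set (EuclideanSpace ℝ (Fin n)))
    (hC : IsClosed C) (hpos : C ⊆ {x | ∀ i, 0 ≤ x i}) :
    IsClosed (convexHull ℝ C + {x : EuclideanSpace ℝ (Fin n) | ∀ i, 0 ≤ x i}) :=
  isClosed_convexHull_add_pointedCone (K := orthant n) (isClosed_orthant n)
    (fun _ ha _ hb => norm_le_norm_add_of_mem_orthant ha hb) hC hpos
end

section
/- Let π : R^n → R be subadditive and let ψ : R^n → R be a sublinear function with π ≤ ψ pointwise. Then π is Lipschitz continuous with Lipschitz constant L := max_{‖r‖=1} ψ(r). -/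
/-! A positively homogeneous `ψ` is determined by its values on the unit sphere, so
`ψ r ≤ L ‖r‖` everywhere. Subadditivity gives `π x - π y ≤ π (x - y) ≤ ψ (x - y)`,
and exchanging `x` and `y` bounds `|π x - π y|`. -/

theorem apply_le_mul_norm_of_smul_eq_mul {E : Type*} [NormedAddCommGroup E] [NormedSpace ℝ E]
    {ψ : E → ℝ} (hψhom : ∀ (r : E) (l : ℝ), 0 ≤ l → ψ (l • r) = l * ψ r) {L : ℝ}
    (hL : L ∈ upperBounds (ψ '' {r : E | ‖r‖ = 1})) (v : E) :
    ψ v ≤ L * ‖v‖ := by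
  rcases eq_or_ne v 0 with rfl | hv
  · have hψ0 : ψ 0 = 0 := by simpa using hψhom 0 0 le_rfl
    simp [hψ0]
  · calc ψ v = ‖v‖ * ψ (‖v‖⁻¹ • v) := by
          rw [← hψhom _ _ (norm_nonneg v), smul_inv_smul₀ (norm_ne_zero_iff.mpr hv)]
      _ ≤ ‖v‖ * L :=
          mul_le_mul_of_nonneg_left (hL ⟨_, norm_smul_inv_norm (𝕜 := ℝ) hv, rfl⟩) (norm_nonneg v)
      _ = L * ‖v‖ := mul_comm _ _

theorem abs_sub_le_mul_norm_sub_of_subadditive {E : Type*} [SeminormedAddCommGroup E]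
    {π : E → ℝ} (hsub : ∀ u v, π (u + v) ≤ π u + π v) {L : ℝ}
    (hbound : ∀ r, π r ≤ L * ‖r‖) (x y : E) :
    |π x - π y| ≤ L * ‖x - y‖ := by
  have hle : ∀ a b : E, π a - π b ≤ L * ‖a - b‖ := fun a b => by
    have := hsub (a - b) b
    rw [sub_add_cancel] at this
    linarith [hbound (a - b)]
  exact abs_sub_le_iff.mpr ⟨hle x y, norm_sub_rev x y ▸ hle y x⟩

theorem stmt3_general (n : ℕ) (π ψ : EuclideanSpace ℝ (Fin n) → ℝ)
    (hsub : ∀ u v, π (u + v) ≤ π u + π v)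
    (hψhom : ∀ (r : EuclideanSpace ℝ (Fin n)) (l : ℝ), 0 ≤ l → ψ (l • r) = l * ψ r)
    (hle : ∀ r, π r ≤ ψ r)
    (L : ℝ) (hL : IsGreatest (ψ '' {r : EuclideanSpace ℝ (Fin n) | ‖r‖ = 1}) L) :
    ∀ x y, |π x - π y| ≤ L * ‖x - y‖ :=
  abs_sub_le_mul_norm_sub_of_subadditive hsub
    (fun r => (hle r).trans (apply_le_mul_norm_of_smul_eq_mul hψhom hL.2 r))

/-- If `π` is subadditive and bounded above by a sublinear `ψ`, then `π` is
Lipschitz continuous with Lipschitz constant `L = max_{‖r‖=1} ψ(r)`. -/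
theorem stmt3 (n : ℕ) (π ψ : EuclideanSpace ℝ (Fin n) → ℝ)
    (hsub : ∀ u v, π (u + v) ≤ π u + π v)
    (hψsub : ∀ u v, ψ (u + v) ≤ ψ u + ψ v)
    (hψhom : ∀ (r : EuclideanSpace ℝ (Fin n)) (l : ℝ), 0 ≤ l → ψ (l • r) = l * ψ r)
    (hle : ∀ r, π r ≤ ψ r)
    (L : ℝ) (hL : IsGreatest (ψ '' {r : EuclideanSpace ℝ (Fin n) | ‖r‖ = 1}) L) :
    ∀ x y, |π x - π y| ≤ L * ‖x - y‖ :=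
  stmt3_general n π ψ hsub hψhom hle L hL
end

section
/- Let V be a vector space over a field F and let C ⊆ V. Then the set of all affine combinations of points of C equals the intersection of all affine hyperplanes of V that contain C, where a hyperplane is a level set {v : F(v) = δ} of a nonzero linear functional F : V → F. (In particular, if C is not contained in any hyperplane, this intersection is all of V.) -/
/-! Affine maps send affine spans to affine spans, so every level set of a functional that
contains `C` contains its affine span. Conversely, if `v` lies outside the affine span and
`p ∈ C`, then `v - p` lies outside the vector span of `C`, and a functional vanishing on the
vector span but not at `v - p` has a level set through `C` that misses `v`. -/

theorem AffineMap.apply_eq_of_mem_affineSpan {k V₁ P₁ V₂ P₂ : Type*} [Ring k] [AddCommGroup V₁]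
    [Module k V₁] [AddTorsor V₁ P₁] [AddCommGroup V₂] [Module k V₂] [AddTorsor V₂ P₂]
    (f : P₁ →ᵃ[k] P₂) {s : Set P₁} {q : P₂} (hs : ∀ c ∈ s, f c = q) {v : P₁}
    (hv : v ∈ affineSpan k s) : f v = q := by
  have hspan : affineSpan k (f '' s) ≤ affineSpan k {q} :=
    affineSpan_mono k (Set.image_subset_iff.2 hs)
  rw [← AffineSubspace.map_span] at hspan
  exact (AffineSubspace.mem_affineSpan_singleton k V₂).1
    (hspan (AffineSubspace.mem_map_of_mem f hv))

theorem exists_linearMap_eq_on_ne_of_notMem_affineSpan {k V : Type*} [Field k] [AddCommGroup V]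
    [Module k V] {s : Set V} {p v : V} (hp : p ∈ s) (hv : v ∉ affineSpan k s) :
    ∃ f : V →ₗ[k] k, (∀ c ∈ s, f c = f p) ∧ f v ≠ f p := by
  have hvp : v - p ∉ vectorSpan k s := by
    rwa [← vsub_eq_sub, ← direction_affineSpan,
      AffineSubspace.vsub_right_mem_direction_iff_mem (mem_affineSpan k hp)]
  obtain ⟨f, hfv, hker⟩ := Submodule.exists_le_ker_of_notMem hvp
  refine ⟨f, fun c hc ↦ ?_, fun h ↦ hfv (by rw [map_sub, h, sub_self])⟩
  have := hker (vsub_mem_vectorSpan k hc hp)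
  rwa [LinearMap.mem_ker, vsub_eq_sub, map_sub, sub_eq_zero] at this

/-- For a nonempty subset `C` of a vector space `V` over a field `F`, the set of
affine combinations of points of `C` (the affine span of `C`) equals the
intersection of all hyperplanes `{v | f v = δ}` (for nonzero linear functionals
`f`) containing `C`. -/
theorem stmt4 (F V : Type*) [Field F] [AddCommGroup V] [Module F V]
    (C : Set V) (hC : C.Nonempty) :
    (affineSpan F C : Set V) =
      ⋂₀ {H : Set V | ∃ (f : V →ₗ[F] F) (δ : F), f ≠ 0 ∧ H = {v | f v = δ} ∧ C ⊆ H} := by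
  ext v
  simp only [SetLike.mem_coe, Set.mem_sInter, Set.mem_ofPred_eq]
  constructor
  · rintro hv _ ⟨f, δ, -, rfl, hCH⟩
    exact f.toAffineMap.apply_eq_of_mem_affineSpan hCH hv
  · intro hv
    by_contra hvC
    obtain ⟨p, hp⟩ := hC
    obtain ⟨f, hfC, hfv⟩ := exists_linearMap_eq_on_ne_of_notMem_affineSpan hp hvC
    have hf : f ≠ 0 := fun h ↦ hfv (by simp [h])
    exact hfv (hv _ ⟨f, f p, hf, rfl, hfC⟩)
end

section
/- Fix b ∈ R^n \ Z^n and let I_b be the set of finitely supported functions y : R^n → Z_+ with Σ_p p·y(p) ∈ b + Z^n. Suppose θ : R^n → R and α ∈ R are such that every y ∈ I_b satisfies Σ_p θ(p)y(p) = α. Then θ is additive: θ(p_1 + p_2) = θ(p_1) + θ(p_2) for all p_1, p_2 ∈ R^n. -/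
open Finsupp

/-- Both `e_{p₁+p₂} + e_r` and `e_{p₁} + e_{p₂} + e_r`, with `r = b - p₁ - p₂`, lie in the fibre
over `b`; comparing their `θ`-weights cancels `θ r`. -/
theorem map_add_of_linearCombination_const_on_fiber {M G : Type*} [AddCommGroup M]
    [AddCancelCommMonoid G] (b : M) (θ : M → G) (α : G)
    (hθ : ∀ y : M →₀ ℕ, linearCombination ℕ id y = b → linearCombination ℕ θ y = α)
    (p₁ p₂ : M) : θ (p₁ + p₂) = θ p₁ + θ p₂ := by
  set r := b - p₁ - p₂
  have hsum := hθ (single (p₁ + p₂) 1 + single r 1) (by simp [r])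
  have hsplit := hθ (single p₁ 1 + single p₂ 1 + single r 1) (by simp [r])
  simp only [map_add, linearCombination_single, one_smul] at hsum hsplit
  exact add_right_cancel (hsum.trans hsplit.symm)

theorem stmt7_general (n : ℕ) (b : Fin n → ℝ)
    (θ : (Fin n → ℝ) → ℝ) (α : ℝ)
    (hval : ∀ y : (Fin n → ℝ) →₀ ℕ,
      (∃ z : Fin n → ℤ, (∑ p ∈ y.support, (y p : ℝ) • p) = b + fun i => (z i : ℝ)) →
      (∑ p ∈ y.support, (y p : ℝ) * θ p) = α) :
    ∀ p₁ p₂ : Fin n → ℝ, θ (p₁ + p₂) = θ p₁ + θ p₂ := by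
  refine map_add_of_linearCombination_const_on_fiber b θ α fun y hy => ?_
  have hint : (∑ p ∈ y.support, (y p : ℝ) • p) = b + fun i => ((0 : ℤ) : ℝ) := by
    simpa [linearCombination_apply, Finsupp.sum, Nat.cast_smul_eq_nsmul, ← Pi.zero_def] using hy
  simpa [linearCombination_apply, Finsupp.sum, nsmul_eq_mul] using hval y ⟨0, hint⟩

/-- Fix `b ∈ ℝ^n \ ℤ^n` and let `I_b` be the set of finitely supported
`y : ℝ^n → ℤ₊` with `∑ p, p • y(p) ∈ b + ℤ^n`. If `∑ p, θ(p) y(p) = α` for all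
`y ∈ I_b`, then `θ` is additive. -/
theorem stmt7 (n : ℕ) (b : Fin n → ℝ)
    (hb : ¬ ∃ z : Fin n → ℤ, b = fun i => (z i : ℝ))
    (θ : (Fin n → ℝ) → ℝ) (α : ℝ)
    (hval : ∀ y : (Fin n → ℝ) →₀ ℕ,
      (∃ z : Fin n → ℤ, (∑ p ∈ y.support, (y p : ℝ) • p) = b + fun i => (z i : ℝ)) →
      (∑ p ∈ y.support, (y p : ℝ) * θ p) = α) :
    ∀ p₁ p₂ : Fin n → ℝ, θ (p₁ + p₂) = θ p₁ + θ p₂ :=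
  stmt7_general n b θ α hval
end

section
/- Let π : R^n → R be subadditive. Then for any a ∈ R^n, inf_{k∈Z_{>0}} π(ka)/k + inf_{k∈Z_{>0}} π(−ka)/k = inf_{k∈Z_{>0}} (π(ka) + π(−ka))/k, provided these infima are finite. -/
/-! Each infimum `inf_k f(k)/k` of a subadditive sequence `f` is, by Fekete's lemma, the limit of
`f(k)/k`. Both `k ↦ π(ka)` and `k ↦ π(-ka)` are subadditive, so the infimum for their sum is the
limit of a sum of two convergent sequences, i.e. the sum of the two limits. -/

open Set Filter Topology

namespace Subadditive

theorem lim_eq_sInf {u : ℕ → ℝ} (h : Subadditive u) :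
    h.lim = sInf {c : ℝ | ∃ k : ℕ, 0 < k ∧ c = u k / k} := by
  rw [Subadditive.lim]
  congr 1
  ext c
  simp only [mem_image, mem_Ici, mem_ofPred_eq, Nat.one_le_iff_ne_zero, Nat.pos_iff_ne_zero,
    eq_comm]

theorem add {u v : ℕ → ℝ} (hu : Subadditive u) (hv : Subadditive v) : Subadditive (u + v) :=
  fun m n => by simpa only [Pi.add_apply, add_add_add_comm] using add_le_add (hu m n) (hv m n)

theorem comp_of_map_add {E : Type*} [Add E] {π : E → ℝ} (hπ : ∀ x y, π (x + y) ≤ π x + π y)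
    {f : ℕ → E} (hf : ∀ m n, f (m + n) = f m + f n) : Subadditive (π ∘ f) :=
  fun m n => by simpa only [Function.comp_apply, hf] using hπ (f m) (f n)

end Subadditive

theorem bddBelow_range_div_of_bddBelow_pos {u : ℕ → ℝ}
    (h : BddBelow {c : ℝ | ∃ k : ℕ, 0 < k ∧ c = u k / k}) :
    BddBelow (range fun n : ℕ => u n / n) := by
  obtain ⟨b, hb⟩ := h
  refine ⟨min b 0, ?_⟩
  rintro _ ⟨n, rfl⟩
  rcases Nat.eq_zero_or_pos n with rfl | hn
  · simp
  · exact (min_le_left _ _).trans (hb ⟨n, hn, rfl⟩)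

theorem Subadditive.sInf_div_add {u v : ℕ → ℝ} (hu : Subadditive u) (hv : Subadditive v)
    (hbu : BddBelow {c : ℝ | ∃ k : ℕ, 0 < k ∧ c = u k / k})
    (hbv : BddBelow {c : ℝ | ∃ k : ℕ, 0 < k ∧ c = v k / k}) :
    sInf {c : ℝ | ∃ k : ℕ, 0 < k ∧ c = u k / k} + sInf {c : ℝ | ∃ k : ℕ, 0 < k ∧ c = v k / k} =
      sInf {c : ℝ | ∃ k : ℕ, 0 < k ∧ c = (u k + v k) / k} := by
  have hbu' := bddBelow_range_div_of_bddBelow_pos hbu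
  have hbv' := bddBelow_range_div_of_bddBelow_pos hbv
  have hsum : Tendsto (fun n : ℕ => (u + v) n / n) atTop (𝓝 (hu.lim + hv.lim)) := by
    simpa only [Pi.add_apply, add_div] using (hu.tendsto_lim hbu').add (hv.tendsto_lim hbv')
  have hbuv : BddBelow (range fun n : ℕ => (u + v) n / n) := by
    obtain ⟨bu, hbu⟩ := hbu'
    obtain ⟨bv, hbv⟩ := hbv'
    refine ⟨bu + bv, ?_⟩
    rintro _ ⟨n, rfl⟩
    simpa only [Pi.add_apply, add_div] using add_le_add (hbu ⟨n, rfl⟩) (hbv ⟨n, rfl⟩)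
  have hlim := tendsto_nhds_unique hsum ((hu.add hv).tendsto_lim hbuv)
  rw [← hu.lim_eq_sInf, ← hv.lim_eq_sInf, hlim, (hu.add hv).lim_eq_sInf]
  simp only [Pi.add_apply]

/-- For subadditive `π : ℝ^n → ℝ` and `a ∈ ℝ^n`, if the infima are finite then
`inf_{k>0} π(ka)/k + inf_{k>0} π(-ka)/k = inf_{k>0} (π(ka)+π(-ka))/k`. -/
theorem stmt9 (n : ℕ) (π : (Fin n → ℝ) → ℝ)
    (hsub : ∀ u v, π (u + v) ≤ π u + π v) (a : Fin n → ℝ)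
    (h1 : BddBelow {c : ℝ | ∃ k : ℕ, 0 < k ∧ c = π ((k : ℝ) • a) / k})
    (h2 : BddBelow {c : ℝ | ∃ k : ℕ, 0 < k ∧ c = π ((-(k : ℝ)) • a) / k}) :
    sInf {c : ℝ | ∃ k : ℕ, 0 < k ∧ c = π ((k : ℝ) • a) / k} +
      sInf {c : ℝ | ∃ k : ℕ, 0 < k ∧ c = π ((-(k : ℝ)) • a) / k} =
    sInf {c : ℝ | ∃ k : ℕ, 0 < k ∧ c = (π ((k : ℝ) • a) + π ((-(k : ℝ)) • a)) / k} := by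
  have hpos : Subadditive fun k : ℕ => π ((k : ℝ) • a) :=
    Subadditive.comp_of_map_add hsub fun m n => by rw [Nat.cast_add, add_smul]
  have hneg : Subadditive fun k : ℕ => π ((-(k : ℝ)) • a) :=
    Subadditive.comp_of_map_add hsub fun m n => by rw [Nat.cast_add, neg_add, add_smul]
  exact hpos.sInf_div_add hneg h1 h2
end

section
/- Fix a finite set P ⊆ R^n and b ∈ R^n. Consider the set Y of vectors y ∈ Z^P_+ such that Σ_{p∈P} p·y(p) ∈ b + Z^n. Then the convex hull of Y in R^P is a rational polyhedron (i.e., a polyhedron definable by finitely many linear inequalities with rational coefficient vectors). -/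
/-
Dickson's lemma (`ℕ^P` is well-quasi-ordered) gives a finite set `E ⊆ Y` of minimal elements with
`Y = E + Y₀`, where `Y₀ = {w ∈ ℕ^P : ∑ p w(p) ∈ ℤⁿ}` is a monoid closed under subtraction
`v - w` for `w ≤ v`; the same lemma applied to `Y₀ \ {0}` shows `Y₀` is generated by a finite set
`R`. Since the convex hull of the monoid generated by `R` is the cone over `R`,
`conv Y = conv E + cone R`, which is the image of `Δ_E × ℝ₊^R` (`Δ_E` the standard simplex) under
a linear map with integer matrix.
Finally, Fourier–Motzkin elimination shows that projections, hence linear images under rational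
matrices, of rational polyhedra are rational polyhedra.
-/

open Set Pointwise

theorem WellQuasiOrderedLE.exists_finset_forall_exists_le {α : Type*} [PartialOrder α]
    [WellQuasiOrderedLE α] (S : Set α) : ∃ B : Finset α, ↑B ⊆ S ∧ ∀ s ∈ S, ∃ b ∈ B, b ≤ s := by
  have hfin := WellQuasiOrderedLE.finite_of_isAntichain (setOfPred_minimal_antichain (· ∈ S))
  refine ⟨hfin.toFinset, fun b hb => (hfin.mem_toFinset.1 hb).prop, fun s hs => ?_⟩
  obtain ⟨b, hbs, hb⟩ := (isPWO_of_wellQuasiOrderedLE S).exists_le_minimal hs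
  exact ⟨b, hfin.mem_toFinset.2 hb, hbs⟩

section
variable {α : Type*} [AddCommMonoid α] [PartialOrder α] [CanonicallyOrderedAdd α] [Sub α]
  [OrderedSub α]

theorem AddMonoidHom.map_tsub_of_le {G : Type*} [AddGroup G] (f : α →+ G) {a b : α} (h : a ≤ b) :
    f (b - a) = f b - f a :=
  eq_sub_of_add_eq (by rw [← map_add, tsub_add_cancel_of_le h])

theorem exists_finset_preimage_coset_eq_add [WellQuasiOrderedLE α] {G : Type*} [AddCommGroup G]
    (f : α →+ G) (H : AddSubgroup G) (b : G) :
    ∃ E : Finset α, {y | f y - b ∈ H} = ↑E + (H.toAddSubmonoid.comap f : Set α) := by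
  obtain ⟨E, hEY, hE⟩ := WellQuasiOrderedLE.exists_finset_forall_exists_le {y | f y - b ∈ H}
  refine ⟨E, Subset.antisymm (fun y hy => ?_) ?_⟩
  · obtain ⟨e, heE, hey⟩ := hE y hy
    refine ⟨e, heE, y - e, ?_, add_tsub_cancel_of_le hey⟩
    have := H.sub_mem hy (hEY heE)
    rwa [sub_sub_sub_cancel_right, ← f.map_tsub_of_le hey] at this
  · rintro _ ⟨e, heE, w, hw, rfl⟩
    show f (e + w) - b ∈ H
    rw [map_add, add_sub_right_comm]
    exact H.add_mem (hEY heE) hw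

end

theorem AddSubmonoid.exists_finset_closure_eq_of_tsub_mem {ι : Type*} [Finite ι]
    (M : AddSubmonoid (ι → ℕ)) (hM : ∀ a ∈ M, ∀ b ∈ M, a ≤ b → b - a ∈ M) :
    ∃ R : Finset (ι → ℕ), closure (R : Set (ι → ℕ)) = M := by
  obtain ⟨R, hRM, hR⟩ :=
    WellQuasiOrderedLE.exists_finset_forall_exists_le {w : ι → ℕ | w ∈ M ∧ w ≠ 0}
  refine ⟨R, le_antisymm (closure_le.2 fun r hr => (hRM hr).1) fun w hw => ?_⟩
  induction w using WellFoundedLT.induction with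
  | ind w ih =>
    rcases eq_or_ne w 0 with rfl | hw0
    · exact zero_mem _
    obtain ⟨r, hrR, hrw⟩ := hR w ⟨hw, hw0⟩
    have hlt : w - r < w := by
      refine lt_of_le_of_ne tsub_le_self fun h => (hRM hrR).2 ?_
      simpa [h] using tsub_add_cancel_of_le hrw
    rw [← tsub_add_cancel_of_le hrw]
    exact add_mem (ih _ hlt (hM r (hRM hrR).1 w hw hrw)) (subset_closure hrR)

section
variable {𝕜 E : Type*} [Field 𝕜] [LinearOrder 𝕜] [IsStrictOrderedRing 𝕜] [AddCommGroup E]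
  [Module 𝕜 E]

theorem convexHull_addSubmonoidClosure [Archimedean 𝕜] (s : Set E) :
    convexHull 𝕜 (AddSubmonoid.closure s : Set E) = PointedCone.hull 𝕜 s := by
  set K := convexHull 𝕜 (AddSubmonoid.closure s : Set E)
  have hconv : Convex 𝕜 K := convex_convexHull 𝕜 _
  have hzero : (0 : E) ∈ K := subset_convexHull 𝕜 _ (zero_mem _)
  have hadd : ∀ x ∈ K, ∀ y ∈ K, x + y ∈ K := fun x hx y hy => by
    have : x + y ∈ K + K := add_mem_add hx hy
    rw [← convexHull_add] at this
    refine convexHull_mono ?_ this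
    rintro _ ⟨a, ha, b, hb, rfl⟩
    exact add_mem ha hb
  have hnsmul : ∀ x ∈ K, ∀ N : ℕ, N • x ∈ K := fun x hx N => by
    induction N with
    | zero => simpa using hzero
    | succ N ih => simpa [succ_nsmul] using hadd _ ih _ hx
  let C : PointedCone 𝕜 E :=
    { carrier := K
      add_mem' := fun hx hy => hadd _ hx _ hy
      zero_mem' := hzero
      smul_mem' := fun c x hx => by
        obtain ⟨N, hN⟩ := exists_nat_gt (c : 𝕜)
        have hN0 : (0 : 𝕜) < N := lt_of_le_of_lt c.2 hN
        have h := hconv.smul_mem_of_zero_mem hzero (hnsmul x hx N)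
          ⟨div_nonneg c.2 hN0.le, (div_le_one hN0).2 hN.le⟩
        rwa [← Nat.cast_smul_eq_nsmul 𝕜, smul_smul, div_mul_cancel₀ _ hN0.ne'] at h }
  refine le_antisymm (convexHull_min ?_ (PointedCone.convex _)) ?_
  · exact AddSubmonoid.closure_le.2 (PointedCone.subset_hull (R := 𝕜))
  · exact Submodule.span_le.2 (AddSubmonoid.subset_closure.trans (subset_convexHull 𝕜 _) : s ⊆ C)

theorem convexHull_range_eq_image_stdSimplex {α : Type*} [Fintype α] (v : α → E) :
    convexHull 𝕜 (range v) = Fintype.linearCombination 𝕜 v '' stdSimplex 𝕜 α := by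
  classical
  rw [← convexHull_basis_eq_stdSimplex, LinearMap.image_convexHull, ← range_comp]
  congr 2
  ext a
  simp [Fintype.linearCombination_apply]

theorem PointedCone.hull_range_eq_image {β : Type*} [Fintype β] (u : β → E) :
    (hull 𝕜 (range u) : Set E) = Fintype.linearCombination 𝕜 u '' {c | ∀ b, 0 ≤ c b} := by
  ext x
  simp only [SetLike.mem_coe, Submodule.mem_span_range_iff_exists_fun, mem_image, mem_ofPred_eq,
    Fintype.linearCombination_apply]
  constructor
  · rintro ⟨c, rfl⟩
    exact ⟨fun b => c b, fun b => (c b).2, rfl⟩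
  · rintro ⟨c, hc, rfl⟩
    exact ⟨fun b => ⟨c b, hc b⟩, rfl⟩

theorem convexHull_range_add_hull_range_eq_image {α β : Type*} [Fintype α] [Fintype β]
    (v : α → E) (u : β → E) :
    convexHull 𝕜 (range v) + PointedCone.hull 𝕜 (range u) =
      Fintype.linearCombination 𝕜 (Sum.elim v u) ''
        {w | (∀ k, 0 ≤ w k) ∧ ∑ a, w (Sum.inl a) = 1} := by
  rw [convexHull_range_eq_image_stdSimplex, PointedCone.hull_range_eq_image]
  ext x
  simp only [mem_add, mem_image, stdSimplex, mem_ofPred_eq, Fintype.linearCombination_apply,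
    Fintype.sum_sum_type, Sum.elim_inl, Sum.elim_inr, Sum.forall]
  constructor
  · rintro ⟨_, ⟨l, ⟨hl, hl1⟩, rfl⟩, _, ⟨c, hc, rfl⟩, rfl⟩
    exact ⟨Sum.elim l c, ⟨⟨hl, hc⟩, hl1⟩, rfl⟩
  · rintro ⟨w, ⟨⟨hl, hc⟩, hl1⟩, rfl⟩
    exact ⟨_, ⟨_, ⟨hl, hl1⟩, rfl⟩, _, ⟨_, hc, rfl⟩, rfl⟩

end

theorem Finset.exists_forall_le_and_forall_ge {α : Type*} [LinearOrder α] [Nonempty α]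
    (L U : Finset α) (h : ∀ l ∈ L, ∀ u ∈ U, l ≤ u) :
    ∃ t, (∀ l ∈ L, l ≤ t) ∧ ∀ u ∈ U, t ≤ u := by
  rcases L.eq_empty_or_nonempty with rfl | hL
  · obtain ⟨t, ht⟩ := U.bddBelow
    exact ⟨t, by simp, ht⟩
  · exact ⟨L.max' hL, fun l hl => L.le_max' l hl, fun u hu => h _ (L.max'_mem hL) u hu⟩

/-- The second condition says that every lower bound `β c' / α c'` on `t` (from `α c' < 0`) is at
most every upper bound `β c / α c` (from `α c > 0`), with the denominators cleared. -/
theorem exists_forall_mul_le_iff {𝕜 κ : Type*} [Field 𝕜] [LinearOrder 𝕜] [IsStrictOrderedRing 𝕜]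
    (s : Finset κ) (α β : κ → 𝕜) :
    (∃ t, ∀ c ∈ s, α c * t ≤ β c) ↔
      (∀ c ∈ s, α c = 0 → 0 ≤ β c) ∧
        ∀ c ∈ s, 0 < α c → ∀ c' ∈ s, α c' < 0 → α c' * β c ≤ α c * β c' := by
  constructor
  · rintro ⟨t, ht⟩
    refine ⟨fun c hc h0 => by simpa [h0] using ht c hc, fun c hc hpos c' hc' hneg => ?_⟩
    nlinarith [ht c hc, ht c' hc']
  classical
  rintro ⟨hzero, hpair⟩
  obtain ⟨t, hlow, hup⟩ := Finset.exists_forall_le_and_forall_ge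
    ((s.filter (α · < 0)).image fun c => β c / α c) ((s.filter (0 < α ·)).image fun c => β c / α c)
    (by
      simp only [Finset.mem_image, Finset.mem_filter]
      rintro _ ⟨c', ⟨hc', hneg⟩, rfl⟩ _ ⟨c, ⟨hc, hpos⟩, rfl⟩
      rw [div_le_iff_of_neg hneg, div_mul_eq_mul_div, div_le_iff₀ hpos]
      linarith [hpair c hc hpos c' hc' hneg])
  refine ⟨t, fun c hc => ?_⟩
  rcases lt_trichotomy (α c) 0 with hneg | h0 | hpos
  · have := hlow _ (Finset.mem_image_of_mem _ (Finset.mem_filter.2 ⟨hc, hneg⟩))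
    rwa [div_le_iff_of_neg hneg, mul_comm] at this
  · simpa [h0] using hzero c hc h0
  · have := hup _ (Finset.mem_image_of_mem _ (Finset.mem_filter.2 ⟨hc, hpos⟩))
    rwa [le_div_iff₀ hpos, mul_comm] at this

section
variable {ι : Type*} [Fintype ι]

def ratPolyhedron (C : Finset ((ι → ℚ) × ℝ)) : Set (ι → ℝ) :=
  {x | ∀ c ∈ C, ∑ i, (c.1 i : ℝ) * x i ≤ c.2}

def IsRatPolyhedron (S : Set (ι → ℝ)) : Prop :=
  ∃ C, ratPolyhedron C = S

theorem ratPolyhedron_union [DecidableEq ((ι → ℚ) × ℝ)] (C D : Finset ((ι → ℚ) × ℝ)) :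
    ratPolyhedron (C ∪ D) = ratPolyhedron C ∩ ratPolyhedron D := by
  ext x
  simp only [ratPolyhedron, Finset.mem_union, or_imp, forall_and, mem_inter_iff, mem_ofPred_eq]

theorem IsRatPolyhedron.inter {S T : Set (ι → ℝ)} (hS : IsRatPolyhedron S)
    (hT : IsRatPolyhedron T) : IsRatPolyhedron (S ∩ T) := by
  classical
  obtain ⟨C, rfl⟩ := hS
  obtain ⟨D, rfl⟩ := hT
  exact ⟨C ∪ D, ratPolyhedron_union C D⟩

theorem isRatPolyhedron_iInter {κ : Type*} [Finite κ] {S : κ → Set (ι → ℝ)}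
    (hS : ∀ k, IsRatPolyhedron (S k)) : IsRatPolyhedron (⋂ k, S k) := by
  classical
  have := Fintype.ofFinite κ
  choose C hC using hS
  refine ⟨Finset.univ.biUnion C, ?_⟩
  ext x
  simp only [ratPolyhedron, ← hC, Finset.mem_biUnion, Finset.mem_univ, true_and, mem_iInter,
    mem_ofPred_eq]
  exact ⟨fun h k c hc => h c ⟨k, hc⟩, fun h c ⟨k, hc⟩ => h k c hc⟩

theorem isRatPolyhedron_halfspace (a : ι → ℚ) (d : ℝ) :
    IsRatPolyhedron {x : ι → ℝ | ∑ i, (a i : ℝ) * x i ≤ d} :=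
  ⟨{(a, d)}, by simp [ratPolyhedron]⟩

theorem isRatPolyhedron_hyperplane (a : ι → ℚ) (d : ℝ) :
    IsRatPolyhedron {x : ι → ℝ | ∑ i, (a i : ℝ) * x i = d} := by
  convert (isRatPolyhedron_halfspace a d).inter (isRatPolyhedron_halfspace (-a) (-d)) using 1
  ext x
  simp [le_antisymm_iff, Finset.sum_neg_distrib]

theorem IsRatPolyhedron.exists_add_single [DecidableEq ι] {S : Set (ι → ℝ)}
    (hS : IsRatPolyhedron S) (j : ι) :
    IsRatPolyhedron {x | ∃ s : ℝ, x + Pi.single j s ∈ S} := by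
  classical
  obtain ⟨C, rfl⟩ := hS
  -- Fourier–Motzkin: the positive combination of `P` and `N` in which the coefficient of `x j`
  -- cancels; together with the constraints not involving `x j` these cut out the projection.
  let comb (P N : (ι → ℚ) × ℝ) : (ι → ℚ) × ℝ :=
    (P.1 j • N.1 - N.1 j • P.1, (P.1 j : ℝ) * N.2 - (N.1 j : ℝ) * P.2)
  refine ⟨C.filter (·.1 j = 0) ∪
    Finset.image₂ comb (C.filter (0 < ·.1 j)) (C.filter (·.1 j < 0)), ?_⟩
  ext x
  have hsat (c : (ι → ℚ) × ℝ) (s : ℝ) :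
      ∑ i, (c.1 i : ℝ) * (x + Pi.single j s : ι → ℝ) i ≤ c.2 ↔
        (c.1 j : ℝ) * s ≤ c.2 - ∑ i, (c.1 i : ℝ) * x i := by
    simp [mul_add, Finset.sum_add_distrib, Pi.single_apply, le_sub_iff_add_le']
  have hcomb (P N : (ι → ℚ) × ℝ) : ∑ i, ((comb P N).1 i : ℝ) * x i ≤ (comb P N).2 ↔
      (N.1 j : ℝ) * (P.2 - ∑ i, (P.1 i : ℝ) * x i) ≤ P.1 j * (N.2 - ∑ i, (N.1 i : ℝ) * x i) := by
    simp only [comb, Pi.sub_apply, Pi.smul_apply, smul_eq_mul, Rat.cast_sub, Rat.cast_mul,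
      sub_mul, Finset.sum_sub_distrib, mul_assoc, ← Finset.mul_sum]
    constructor <;> intro h <;> linarith
  rw [ratPolyhedron_union]
  simp only [mem_inter_iff, ratPolyhedron, mem_ofPred_eq, hsat, hcomb,
    Finset.mem_filter, and_imp, Finset.forall_mem_image₂, exists_forall_mul_le_iff,
    Rat.cast_eq_zero, sub_nonneg, Rat.cast_pos, Rat.cast_lt_zero]

theorem IsRatPolyhedron.exists_eqOn_compl [DecidableEq ι] {S : Set (ι → ℝ)}
    (hS : IsRatPolyhedron S) (J : Finset ι) :
    IsRatPolyhedron {x | ∃ x' ∈ S, ∀ i ∉ J, x' i = x i} := by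
  induction J using Finset.induction_on with
  | empty => simpa [← funext_iff] using hS
  | insert j J _ ih =>
    convert ih.exists_add_single j using 1
    ext x
    constructor
    · rintro ⟨x', hx', hagree⟩
      refine ⟨x' j - x j, x', hx', fun i hi => ?_⟩
      by_cases hij : i = j
      · simp [hij]
      · simp [hij, hagree i (by simp [hij, hi])]
    · rintro ⟨s, x', hx', hagree⟩
      refine ⟨x', hx', fun i hi => ?_⟩
      rw [Finset.mem_insert, not_or] at hi
      simpa [Pi.single_apply, hi.1] using hagree i hi.2

theorem IsRatPolyhedron.preimage_sumElim_zero {κ : Type*} [Fintype κ] {S : Set (ι ⊕ κ → ℝ)}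
    (hS : IsRatPolyhedron S) : IsRatPolyhedron {y : ι → ℝ | Sum.elim y 0 ∈ S} := by
  classical
  obtain ⟨C, rfl⟩ := hS
  refine ⟨C.image fun c => (c.1 ∘ Sum.inl, c.2), ?_⟩
  ext y
  simp only [ratPolyhedron, mem_ofPred_eq, Finset.forall_mem_image, Fintype.sum_sum_type,
    Function.comp_apply, Sum.elim_inl, Sum.elim_inr, Pi.zero_apply, mul_zero, Finset.sum_const_zero,
    add_zero]

theorem IsRatPolyhedron.preimage_comp_inr {κ : Type*} [Fintype κ] {S : Set (κ → ℝ)}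
    (hS : IsRatPolyhedron S) : IsRatPolyhedron {w : ι ⊕ κ → ℝ | w ∘ Sum.inr ∈ S} := by
  classical
  obtain ⟨C, rfl⟩ := hS
  refine ⟨C.image fun c => (Sum.elim 0 c.1, c.2), ?_⟩
  ext w
  simp only [ratPolyhedron, mem_ofPred_eq, Finset.forall_mem_image, Fintype.sum_sum_type,
    Function.comp_apply, Sum.elim_inl, Sum.elim_inr, Pi.zero_apply, Rat.cast_zero, zero_mul,
    Finset.sum_const_zero, zero_add]

theorem IsRatPolyhedron.exists_sumElim {κ : Type*} [Fintype κ] {S : Set (ι ⊕ κ → ℝ)}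
    (hS : IsRatPolyhedron S) : IsRatPolyhedron {y : ι → ℝ | ∃ z, Sum.elim y z ∈ S} := by
  classical
  convert (hS.exists_eqOn_compl (Finset.univ.map .inr)).preimage_sumElim_zero using 1
  ext y
  simp only [mem_ofPred_eq, Finset.mem_map, Finset.mem_univ, true_and, not_exists]
  constructor
  · rintro ⟨z, hz⟩
    exact ⟨_, hz, by rintro (i | k) h <;> simp_all⟩
  · rintro ⟨x', hx', hagree⟩
    refine ⟨x' ∘ Sum.inr, ?_⟩
    convert hx'
    ext (i | k)
    · exact (hagree (.inl i) fun k h => Sum.inr_ne_inl h).symm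
    · rfl

theorem IsRatPolyhedron.image_linearCombination {κ : Type*} [Fintype κ] (v : κ → ι → ℚ)
    {P : Set (κ → ℝ)} (hP : IsRatPolyhedron P) :
    IsRatPolyhedron (Fintype.linearCombination ℝ (fun k i => (v k i : ℝ)) '' P) := by
  classical
  have hgraph := hP.preimage_comp_inr.inter (isRatPolyhedron_iInter fun i =>
    isRatPolyhedron_hyperplane (ι := ι ⊕ κ) (Sum.elim (Pi.single i 1) fun k => -v k i) 0)
  convert hgraph.exists_sumElim using 1
  ext y
  simp [Fintype.linearCombination_apply, Fintype.sum_sum_type, Pi.single_apply, funext_iff,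
    apply_ite ((↑) : ℚ → ℝ), mul_comm, ← sub_eq_add_neg, sub_eq_zero]
  simp_rw [eq_comm]

theorem isRatPolyhedron_nonneg_sum_inl_eq_one {α β : Type*} [Fintype α] [Fintype β] :
    IsRatPolyhedron {w : α ⊕ β → ℝ | (∀ k, 0 ≤ w k) ∧ ∑ a, w (Sum.inl a) = 1} := by
  classical
  have hΔ : {w : α ⊕ β → ℝ | (∀ k, 0 ≤ w k) ∧ ∑ a, w (Sum.inl a) = 1} =
      (⋂ k, {w | ∑ l, ((-Pi.single k 1 : α ⊕ β → ℚ) l : ℝ) * w l ≤ 0}) ∩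
        {w | ∑ l, ((Sum.elim 1 0 : α ⊕ β → ℚ) l : ℝ) * w l = 1} := by
    ext w
    simp [Pi.single_apply, Fintype.sum_sum_type, apply_ite ((↑) : ℚ → ℝ)]
  rw [hΔ]
  exact (isRatPolyhedron_iInter fun k => isRatPolyhedron_halfspace _ _).inter
    (isRatPolyhedron_hyperplane _ _)

theorem isRatPolyhedron_convexHull_add_hull {α β : Type*} [Fintype α] [Fintype β]
    (v : α → ι → ℚ) (u : β → ι → ℚ) :
    IsRatPolyhedron (convexHull ℝ (range fun a i => (v a i : ℝ)) +
      (PointedCone.hull ℝ (range fun b i => (u b i : ℝ)) : Set (ι → ℝ))) := by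
  rw [convexHull_range_add_hull_range_eq_image]
  have hfam : Sum.elim (fun a i => (v a i : ℝ)) (fun b i => (u b i : ℝ)) =
      fun k i => (Sum.elim v u k i : ℝ) := by
    ext (a | b) i <;> rfl
  rw [hfam]
  exact isRatPolyhedron_nonneg_sum_inl_eq_one.image_linearCombination (Sum.elim v u)

theorem IsRatPolyhedron.exists_fin {S : Set (ι → ℝ)} (hS : IsRatPolyhedron S) :
    ∃ (k : ℕ) (Θ : Fin k → ι → ℚ) (d : Fin k → ℝ),
      S = {x | ∀ l, ∑ i, (Θ l i : ℝ) * x i ≤ d l} := by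
  obtain ⟨C, rfl⟩ := hS
  refine ⟨C.card, fun l => (C.equivFin.symm l).1.1, fun l => (C.equivFin.symm l).1.2, ?_⟩
  ext x
  simp only [ratPolyhedron, mem_ofPred_eq]
  exact ⟨fun h l => h _ (C.equivFin.symm l).2, fun h c hc => by simpa using h (C.equivFin ⟨c, hc⟩)⟩

end

theorem isRatPolyhedron_convexHull_preimage_coset {ι G : Type*} [Fintype ι] [AddCommGroup G]
    (f : (ι → ℕ) →+ G) (H : AddSubgroup G) (b : G) :
    IsRatPolyhedron (convexHull ℝ ((fun y i => (y i : ℝ)) '' {y | f y - b ∈ H})) := by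
  obtain ⟨E, hE⟩ := exists_finset_preimage_coset_eq_add f H b
  obtain ⟨R, hR⟩ := (H.toAddSubmonoid.comap f).exists_finset_closure_eq_of_tsub_mem
    fun a ha c hc hac => by
      change f (c - a) ∈ H
      rw [f.map_tsub_of_le hac]
      exact H.sub_mem hc ha
  let castN := (Nat.castAddMonoidHom ℝ).compLeft ι
  have hcast (s : Set (ι → ℕ)) :
      castN '' s = range fun y : s => fun i => ((y.1 i : ℚ) : ℝ) := by
    rw [image_eq_range]
    congr with y i
  have hY : (fun y i => (y i : ℝ)) '' {y | f y - b ∈ H} =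
      castN '' ↑E + ↑((AddSubmonoid.closure (R : Set (ι → ℕ))).map castN) := by
    rw [hE, ← hR]
    exact image_add castN
  rw [hY, AddMonoidHom.map_mclosure, convexHull_add, convexHull_addSubmonoidClosure, hcast, hcast]
  exact isRatPolyhedron_convexHull_add_hull _ _

/-- For a finite set `P = {p 0, …, p (m-1)} ⊆ ℝ^n` and `b ∈ ℝ^n`, the convex
hull of `{y ∈ ℤ^P₊ : ∑ p, p·y(p) ∈ b + ℤ^n}` is a rational polyhedron: it is
definable by finitely many linear inequalities with rational normal vectors. -/
theorem stmt10 (n m : ℕ) (p : Fin m → Fin n → ℝ) (b : Fin n → ℝ) :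
    ∃ (k : ℕ) (Θ : Fin k → Fin m → ℚ) (d : Fin k → ℝ),
      convexHull ℝ {y : Fin m → ℝ | ∃ yi : Fin m → ℕ,
          y = (fun j => (yi j : ℝ)) ∧
          ∃ z : Fin n → ℤ, (∑ j, (yi j : ℝ) • p j) = b + fun i => (z i : ℝ)} =
      {y : Fin m → ℝ | ∀ i, (∑ j, (Θ i j : ℝ) * y j) ≤ d i} := by
  refine IsRatPolyhedron.exists_fin ?_
  convert isRatPolyhedron_convexHull_preimage_coset (Fintype.linearCombination ℕ p).toAddMonoidHom
    ((Int.castAddHom ℝ).compLeft (Fin n)).range b using 2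
  ext y
  simp only [mem_ofPred_eq, mem_image, AddMonoidHom.mem_range, LinearMap.toAddMonoidHom_coe,
    Fintype.linearCombination_apply, Nat.cast_smul_eq_nsmul, eq_sub_iff_add_eq']
  exact ⟨fun ⟨yi, hy, z, hz⟩ => ⟨yi, ⟨z, hz.symm⟩, hy.symm⟩,
    fun ⟨yi, ⟨z, hz⟩, hy⟩ => ⟨yi, hy.symm, z, hz.symm⟩⟩
end

section
/- Fix a finite set P ⊆ R^n and b ∈ R^n, and let C^P := conv{y ∈ Z^P_+ : Σ_{p∈P} p·y(p) ∈ b + Z^n}. Then every extreme ray of the polyhedron C^P is spanned by some d ∈ Z^P_+ with Σ_{p∈P} p·d(p) ∈ Z^n. -/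
/-!
Let `S ⊆ ℕ^ι` be the set of nonnegative integer points `y` with `∑ p·y(p) ∈ b + ℤ^n`, i.e. a fibre
of the additive map `ψ : ℕ^ι → ℝ^n ⧸ ℤ^n`, and let `R = ker ψ`. Every `y ∈ S` lies above a
minimal element `f` of `S` with `y - f ∈ R`, and by Dickson's lemma every element of `R` is a sum
of the finitely many minimal nonzero elements of `R` (the Hilbert basis). Hence
`C = conv S ⊆ conv (min S) + cone (Hilbert basis)`, with the first summand bounded and the second
a closed cone (its finitely many generators all have positive coordinate sum), so the recession cone of `C` lies in the Hilbert-basis cone; conversely every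
element of `R` is a recession direction. An extreme ray of the recession cone, written as a
nonnegative combination of Hilbert-basis elements, must therefore be spanned by one of them.
-/

open Set Filter Topology Pointwise

section RecessionCone

variable {𝕜 E : Type*} [Semiring 𝕜] [PartialOrder 𝕜] [IsOrderedRing 𝕜] [AddCommMonoid E]
  [Module 𝕜 E]

variable (𝕜) in
def recessionCone (C : Set E) : PointedCone 𝕜 E where
  carrier := {v | ∀ x ∈ C, ∀ t : 𝕜, 0 ≤ t → x + t • v ∈ C}
  add_mem' {v w} hv hw x hx t ht := by
    simpa only [smul_add, add_assoc] using hw _ (hv x hx t ht) t ht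
  zero_mem' x hx t _ := by simpa only [smul_zero, add_zero] using hx
  smul_mem' c v hv x hx t ht := by
    simpa only [← Nonneg.coe_smul, smul_smul] using hv x hx (t * c) (mul_nonneg ht c.2)

@[simp]
theorem recessionCone_empty : recessionCone 𝕜 (∅ : Set E) = ⊤ :=
  eq_top_iff.2 fun _ _ _ hx => hx.elim

end RecessionCone

theorem mem_recessionCone_convexHull {E : Type*} [AddCommGroup E] [Module ℝ E] {A : Set E}
    {v : E} (hv : ∀ a ∈ A, a + v ∈ A) : v ∈ recessionCone ℝ (convexHull ℝ A) := by
  have hnat : ∀ a ∈ A, ∀ k : ℕ, a + (k : ℝ) • v ∈ A := by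
    intro a ha k
    induction k with
    | zero => simpa using ha
    | succ k ih => simpa [add_smul, add_assoc] using hv _ ih
  let C' : Set E := {x | ∀ t : ℝ, 0 ≤ t → x + t • v ∈ convexHull ℝ A}
  have hC' : Convex ℝ C' := by
    intro x hx y hy a b ha hb hab t ht
    convert convex_convexHull ℝ A (hx t ht) (hy t ht) ha hb hab using 1
    linear_combination (norm := module) -(hab • (t • v))
  refine fun x hx => convexHull_min (fun a ha t ht => ?_) hC' hx
  -- `a + t • v` lies on the segment between `a + ⌊t⌋ • v` and `a + (⌊t⌋ + 1) • v`
  have hθ : t - ⌊t⌋₊ ∈ Icc (0 : ℝ) 1 :=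
    ⟨sub_nonneg.2 (Nat.floor_le ht), by linarith [Nat.lt_floor_add_one t]⟩
  have := convex_convexHull ℝ A (subset_convexHull ℝ A (hnat a ha ⌊t⌋₊))
    (subset_convexHull ℝ A (hnat a ha (⌊t⌋₊ + 1))) (sub_nonneg.2 hθ.2) hθ.1 (by ring)
  convert this using 1
  push_cast
  module

namespace PointedCone

variable {E : Type*} [AddCommGroup E] [Module ℝ E]

def IsExtremeRay (K : PointedCone ℝ E) (d : E) : Prop :=
  d ∈ K ∧ d ≠ 0 ∧ ∀ d₁ ∈ K, ∀ d₂ ∈ K, d = d₁ + d₂ → ∃ t : ℝ, 0 ≤ t ∧ d₁ = t • d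

variable {K : PointedCone ℝ E} {d : E}

theorem IsExtremeRay.ne_top (hd : K.IsExtremeRay d) : K ≠ ⊤ := by
  obtain ⟨-, hd0, hext⟩ := hd
  rintro rfl
  obtain ⟨t, ht, hdt⟩ := hext (-d) trivial ((2 : ℝ) • d) trivial (by module)
  have : (t + 1) • d = 0 := by rw [add_smul, one_smul, ← hdt, neg_add_cancel]
  exact hd0 ((smul_eq_zero.1 this).resolve_left (by linarith))

theorem IsExtremeRay.exists_pos_smul_eq_of_mem_hull {κ : Type*} [Finite κ] {v : κ → E}
    (hd : K.IsExtremeRay d) (hvK : hull ℝ (range v) ≤ K) (hdv : d ∈ hull ℝ (range v)) :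
    ∃ i, ∃ t : ℝ, 0 < t ∧ d = t • v i := by
  classical
  have := Fintype.ofFinite κ
  obtain ⟨-, hd0, hext⟩ := hd
  have hv (i : κ) : v i ∈ K := hvK (subset_hull ⟨i, rfl⟩)
  obtain ⟨c, hc⟩ := (Submodule.mem_span_range_iff_exists_fun _).1 hdv
  obtain ⟨i, hi⟩ : ∃ i, c i • v i ≠ 0 := by
    by_contra! h
    exact hd0 (hc ▸ Finset.sum_eq_zero fun i _ => h i)
  have hrest : ∑ j ∈ Finset.univ.erase i, c j • v j ∈ K :=
    Submodule.sum_mem _ fun j _ => Submodule.smul_mem K (c j) (hv j)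
  obtain ⟨t, ht, hit⟩ := hext _ (Submodule.smul_mem K (c i) (hv i)) _ hrest
    (by rw [← hc]; exact (Finset.add_sum_erase _ _ (Finset.mem_univ i)).symm)
  have ht0 : t ≠ 0 := by rintro rfl; exact hi (by simpa using hit)
  have hci : (c i : ℝ) ≠ 0 := fun h => hi (by rw [← Nonneg.coe_smul, h, zero_smul])
  refine ⟨i, c i / t, div_pos (lt_of_le_of_ne (c i).2 hci.symm) (ht.lt_of_ne' ht0), ?_⟩
  rw [div_eq_inv_mul, mul_smul, Nonneg.coe_smul, hit, smul_smul, inv_mul_cancel₀ ht0, one_smul]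

variable [TopologicalSpace E] [IsTopologicalAddGroup E] [ContinuousSMul ℝ E]

theorem isClosed_hull_range_of_pos [T2Space E] {κ : Type*} [Finite κ] (v : κ → E)
    (σ : E →L[ℝ] ℝ) (hσ : ∀ i, 0 < σ (v i)) : IsClosed (hull ℝ (range v) : Set E) := by
  have := Fintype.ofFinite κ
  -- Below the level `M` of `σ`, the cone is the image of a compact box of coefficients.
  let box (M : ℝ) : Set E :=
    (fun c : κ → ℝ => ∑ i, c i • v i) '' Set.univ.pi fun i => Icc 0 (M / σ (v i))
  have hbox_closed (M : ℝ) : IsClosed (box M) :=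
    ((isCompact_univ_pi fun _ => isCompact_Icc).image (by fun_prop)).isClosed
  have hbox_sub (M : ℝ) : box M ⊆ hull ℝ (range v) := by
    rintro _ ⟨c, hc, rfl⟩
    exact Submodule.sum_mem _ fun i _ =>
      (hull ℝ (range v)).smul_mem (hc i trivial).1 (subset_hull (mem_range_self i))
  have hsub_box (M : ℝ) : {x | σ x < M} ∩ hull ℝ (range v) ⊆ box M := by
    rintro x ⟨hxM, hx⟩
    obtain ⟨c, rfl⟩ := (Submodule.mem_span_range_iff_exists_fun _).1 hx
    refine ⟨fun i => c i, fun i _ => ⟨(c i).2, ?_⟩, by simp only [Nonneg.coe_smul]⟩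
    rw [le_div_iff₀ (hσ i)]
    calc (c i : ℝ) * σ (v i) ≤ ∑ j, (c j : ℝ) * σ (v j) :=
          Finset.single_le_sum (fun j _ => mul_nonneg (c j).2 (hσ j).le) (Finset.mem_univ i)
      _ = σ (∑ j, c j • v j) := by simp [map_sum, ← Nonneg.coe_smul]
      _ ≤ M := hxM.le
  refine isClosed_of_closure_subset fun y hy => ?_
  have hU : IsOpen {x | σ x < σ y + 1} := isOpen_lt σ.continuous continuous_const
  exact hbox_sub _ (closure_minimal (hsub_box _) (hbox_closed _)
    (hU.inter_closure ⟨lt_add_one (σ y), hy⟩))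

theorem recessionCone_le_of_subset_add {A C : Set E} {B : PointedCone ℝ E}
    (hA : Bornology.IsVonNBounded ℝ A) (hB : IsClosed (B : Set E)) (hCAB : C ⊆ A + B)
    (hC : C.Nonempty) : recessionCone ℝ C ≤ B := by
  intro d hd
  obtain ⟨x, hx⟩ := hC
  choose a ha b hb hab using fun k : ℕ => Set.mem_add.1 (hCAB (hd x hx k k.cast_nonneg))
  -- `b k / k = d + (x - a k) / k`, and `a k` stays bounded
  have hlim : Tendsto (fun k : ℕ => d + ((k : ℝ)⁻¹ • x - (k : ℝ)⁻¹ • a k)) atTop (𝓝 d) := by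
    have h0 := tendsto_inv_atTop_nhds_zero_nat (𝕜 := ℝ)
    simpa using tendsto_const_nhds.add
      ((h0.smul_const x).sub (hA.smul_tendsto_zero (.of_forall ha) h0))
  refine hB.mem_of_tendsto hlim (eventually_atTop.2 ⟨1, fun k hk => SetLike.mem_coe.2 ?_⟩)
  have hk : (k : ℝ) ≠ 0 := by positivity
  convert B.smul_mem (inv_nonneg.2 k.cast_nonneg) (hb k) using 1
  rw [eq_sub_of_add_eq' (hab k), smul_sub, smul_add, smul_smul, inv_mul_cancel₀ hk, one_smul]
  abel

end PointedCone

section HilbertBasis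

open PointedCone

variable {ι G : Type*} [AddCommGroup G]

def natToReal (ι : Type*) : (ι → ℕ) →+ (ι → ℝ) := (Nat.castAddMonoidHom ℝ).compLeft ι

@[simp]
theorem natToReal_apply (y : ι → ℕ) (j : ι) : natToReal ι y j = y j := rfl

theorem AddMonoidHom.map_tsub_of_le_s11 (ψ : (ι → ℕ) →+ G) {f y : ι → ℕ} (h : f ≤ y) :
    ψ (y - f) = ψ y - ψ f :=
  eq_sub_of_add_eq' (by rw [← map_add, add_tsub_cancel_of_le h])

def hilbertBasis (ψ : (ι → ℕ) →+ G) : Set (ι → ℕ) := {g | Minimal (fun c => ψ c = 0 ∧ c ≠ 0) g}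

def hilbertCone (ψ : (ι → ℕ) →+ G) : PointedCone ℝ (ι → ℝ) :=
  hull ℝ (range fun g : hilbertBasis ψ => natToReal ι g)

variable (ψ : (ι → ℕ) →+ G) (β : G)

theorem hilbertCone_le_recessionCone :
    hilbertCone ψ ≤ recessionCone ℝ (convexHull ℝ (natToReal ι '' (ψ ⁻¹' {β}))) := by
  refine Submodule.span_le.2 ?_
  rintro _ ⟨g, rfl⟩
  refine mem_recessionCone_convexHull ?_
  rintro _ ⟨y, hy, rfl⟩
  exact ⟨y + g, by simpa [g.2.1.1] using hy, map_add _ _ _⟩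

section

variable [Finite ι]

instance : Finite (hilbertBasis ψ) :=
  (WellQuasiOrderedLE.finite_of_isAntichain (setOfPred_minimal_antichain _)).to_subtype

theorem mker_le_closure_hilbertBasis :
    AddMonoidHom.mker ψ ≤ AddSubmonoid.closure (hilbertBasis ψ) := by
  intro c
  induction c using WellFoundedLT.induction with
  | _ c ih =>
  intro hc
  rw [AddMonoidHom.mem_mker] at hc
  by_cases hc0 : c = 0
  · exact hc0 ▸ zero_mem _
  obtain ⟨g, hgc, hg⟩ := exists_minimal_le_of_wellFoundedLT
    (fun c => ψ c = 0 ∧ c ≠ 0) c ⟨hc, hc0⟩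
  have hsub : c - g < c := by
    refine lt_of_le_of_ne tsub_le_self fun h => hg.1.2 ?_
    simpa [h] using add_tsub_cancel_of_le hgc
  rw [← add_tsub_cancel_of_le hgc]
  exact add_mem (AddSubmonoid.subset_closure hg) (ih _ hsub (by
    rw [AddMonoidHom.mem_mker, ψ.map_tsub_of_le_s11 hgc, hc, hg.1.1, sub_zero]))

theorem natToReal_mem_hilbertCone {c : ι → ℕ} (hc : ψ c = 0) : natToReal ι c ∈ hilbertCone ψ := by
  have : AddSubmonoid.closure (hilbertBasis ψ) ≤
      (hilbertCone ψ).toAddSubmonoid.comap (natToReal ι) :=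
    AddSubmonoid.closure_le.2 fun g hg => subset_hull ⟨⟨g, hg⟩, rfl⟩
  exact this (mker_le_closure_hilbertBasis ψ hc)

theorem convexHull_fiber_subset :
    convexHull ℝ (natToReal ι '' (ψ ⁻¹' {β})) ⊆
      convexHull ℝ (natToReal ι '' {f | Minimal (· ∈ ψ ⁻¹' {β}) f}) + hilbertCone ψ := by
  refine convexHull_min ?_ ((convex_convexHull ℝ _).add (hilbertCone ψ).convex)
  rintro _ ⟨y, hy, rfl⟩
  obtain ⟨f, hfy, hf⟩ := exists_minimal_le_of_wellFoundedLT (· ∈ ψ ⁻¹' {β}) y hy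
  rw [← add_tsub_cancel_of_le hfy, map_add]
  refine Set.add_mem_add (subset_convexHull ℝ _ (mem_image_of_mem _ hf))
    (natToReal_mem_hilbertCone ψ ?_)
  rw [ψ.map_tsub_of_le_s11 hfy, show ψ y = β from hy, show ψ f = β from hf.1, sub_self]

end

variable [Fintype ι]

theorem isClosed_hilbertCone : IsClosed (hilbertCone ψ : Set (ι → ℝ)) := by
  refine isClosed_hull_range_of_pos _ (∑ j, ContinuousLinearMap.proj j) fun g => ?_
  obtain ⟨j, hj⟩ := Function.ne_iff.1 g.2.1.2
  have hσ : (∑ j, ContinuousLinearMap.proj j : (ι → ℝ) →L[ℝ] ℝ) (natToReal ι g) =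
      ∑ j, (g.1 j : ℝ) := by
    simp
  rw [hσ]
  exact Finset.sum_pos' (fun j _ => Nat.cast_nonneg _)
    ⟨j, Finset.mem_univ j, Nat.cast_pos.2 (Nat.pos_of_ne_zero hj)⟩

theorem recessionCone_convexHull_fiber_le (hβ : (ψ ⁻¹' {β}).Nonempty) :
    recessionCone ℝ (convexHull ℝ (natToReal ι '' (ψ ⁻¹' {β}))) ≤ hilbertCone ψ := by
  have hmin : {f | Minimal (· ∈ ψ ⁻¹' {β}) f}.Finite :=
    WellQuasiOrderedLE.finite_of_isAntichain (setOfPred_minimal_antichain _)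
  exact recessionCone_le_of_subset_add (((hmin.image _).isCompact_convexHull ℝ).isVonNBounded ℝ)
    (isClosed_hilbertCone ψ) (convexHull_fiber_subset ψ β)
    ((hβ.image _).mono (subset_convexHull ℝ _))

theorem exists_map_eq_zero_of_isExtremeRay {d : ι → ℝ}
    (hd : (recessionCone ℝ (convexHull ℝ (natToReal ι '' (ψ ⁻¹' {β})))).IsExtremeRay d) :
    ∃ c, ψ c = 0 ∧ ∃ t : ℝ, 0 < t ∧ d = t • natToReal ι c := by
  obtain ⟨y, hy⟩ : (ψ ⁻¹' {β}).Nonempty := by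
    by_contra! h
    exact hd.ne_top (by simp [h])
  obtain ⟨g, t, ht, rfl⟩ := hd.exists_pos_smul_eq_of_mem_hull
    (hilbertCone_le_recessionCone ψ β) (recessionCone_convexHull_fiber_le ψ β ⟨y, hy⟩ hd.1)
  exact ⟨g, g.2.1.1, t, ht, rfl⟩

end HilbertBasis

theorem QuotientAddGroup.mk_eq_mk_iff_exists_intCast {κ : Type*} {x a : κ → ℝ} :
    (x : (κ → ℝ) ⧸ ((Int.castAddHom ℝ).compLeft κ).range) = a ↔
      ∃ z : κ → ℤ, x = a + fun i => (z i : ℝ) := by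
  rw [eq_comm, QuotientAddGroup.eq, AddMonoidHom.mem_range]
  refine exists_congr fun z => ?_
  rw [eq_neg_add_iff_add_eq, eq_comm]
  rfl

/-- For finite `P ⊆ ℝ^n` and `b ∈ ℝ^n`, let
`C^P = conv{y ∈ ℤ^P₊ : ∑ p, p·y(p) ∈ b + ℤ^n}`. Every extreme ray of `C^P`
(a nonzero direction `d` of the recession cone such that any decomposition
`d = d₁ + d₂` within the recession cone has `d₁` a nonnegative multiple of `d`)
is spanned by some `c ∈ ℤ^P₊` with `∑ p, p·c(p) ∈ ℤ^n`. -/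
theorem stmt11 (n m : ℕ) (p : Fin m → Fin n → ℝ) (b : Fin n → ℝ)
    (C : Set (Fin m → ℝ))
    (hC : C = convexHull ℝ {y : Fin m → ℝ | ∃ yi : Fin m → ℕ,
        y = (fun j => (yi j : ℝ)) ∧
        ∃ z : Fin n → ℤ, (∑ j, (yi j : ℝ) • p j) = b + fun i => (z i : ℝ)})
    (K : Set (Fin m → ℝ))
    (hK : K = {v : Fin m → ℝ | ∀ x ∈ C, ∀ t : ℝ, 0 ≤ t → x + t • v ∈ C})
    (d : Fin m → ℝ) (hdK : d ∈ K) (hd0 : d ≠ 0)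
    (hext : ∀ d₁ ∈ K, ∀ d₂ ∈ K, d = d₁ + d₂ → ∃ t : ℝ, 0 ≤ t ∧ d₁ = t • d) :
    ∃ (c : Fin m → ℕ) (t : ℝ), 0 < t ∧ d = t • (fun j => (c j : ℝ)) ∧
      ∃ z : Fin n → ℤ, (∑ j, (c j : ℝ) • p j) = fun i => (z i : ℝ) := by
  subst hC hK
  -- `ψ y` is `∑ j, y j • p j` modulo `ℤ^n`
  let ψ := (QuotientAddGroup.mk' ((Int.castAddHom ℝ).compLeft (Fin n)).range).comp
    ((Fintype.linearCombination ℝ p).toAddMonoidHom.comp (natToReal (Fin m)))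
  have hψ (y : Fin m → ℕ) (a : Fin n → ℝ) :
      ψ y = a ↔ ∃ z : Fin n → ℤ, ∑ j, (y j : ℝ) • p j = a + fun i => (z i : ℝ) :=
    QuotientAddGroup.mk_eq_mk_iff_exists_intCast
  have hgen : {y : Fin m → ℝ | ∃ yi : Fin m → ℕ, y = (fun j => (yi j : ℝ)) ∧
      ∃ z : Fin n → ℤ, (∑ j, (yi j : ℝ) • p j) = b + fun i => (z i : ℝ)} =
      natToReal (Fin m) '' (ψ ⁻¹' {(b : _ ⧸ _)}) := by
    ext y
    constructor
    · rintro ⟨yi, rfl, hz⟩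
      exact ⟨yi, (hψ yi b).2 hz, rfl⟩
    · rintro ⟨yi, hz, rfl⟩
      exact ⟨yi, rfl, (hψ yi b).1 hz⟩
  rw [hgen] at hdK hext
  obtain ⟨c, hc, t, ht, rfl⟩ := exists_map_eq_zero_of_isExtremeRay ψ _ ⟨hdK, hd0, hext⟩
  exact ⟨c, t, ht, rfl, by simpa using (hψ c 0).1 (by simpa using hc)⟩
end

section
/- Let Y ⊆ Z^d_+ be a set of nonnegative integer vectors closed under addition of vectors from a monoid M ⊆ Z^d_+ (specifically, Y = {y ∈ Z^d_+ : Ay ∈ b + Z^n} for a real matrix A and b ∈ R^n). Then there exist finite sets E, R ⊆ Z^d_+ such that Y = E + integ.cone(R), where integ.cone(R) is the set of nonnegative integer combinations of elements of R. -/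
/-!
`Y` is the preimage of a coset `b + ℤⁿ` under the additive map `y ↦ A y` on `ℕᵈ`, and the
preimage `M` of `ℤⁿ` itself is a submonoid closed under taking differences, hence finitely
generated (Gordan's lemma, a consequence of Dickson's lemma). Every `y ∈ Y` lies above a minimal
element `e` of `Y` with `y - e ∈ M`, and the minimal elements form an antichain, which is finite
again by Dickson's lemma.
-/

open scoped Pointwise

section CosetPreimage

variable {α G : Type*} [AddCommMonoid α] [PartialOrder α] [CanonicallyOrderedAdd α]
  [AddCommGroup G]

theorem AddSubgroup.fg_comap_toAddSubmonoid [IsOrderedCancelAddMonoid α] [WellQuasiOrderedLE α]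
    (f : α →+ G) (H : AddSubgroup G) : (H.toAddSubmonoid.comap f).FG :=
  AddSubmonoid.fg_of_subtractive fun x hx y hxy => by
    simpa using H.sub_mem hxy hx

theorem setOf_sub_mem_eq_minimal_add_comap [WellFoundedLT α] (f : α →+ G) (H : AddSubgroup G)
    (b : G) :
    {y | f y - b ∈ H} =
      {y | Minimal (f · - b ∈ H) y} + (H.toAddSubmonoid.comap f : Set α) := by
  ext y
  constructor
  · intro hy
    obtain ⟨e, hey, he⟩ := exists_minimal_le_of_wellFoundedLT _ y hy
    obtain ⟨m, rfl⟩ := exists_add_of_le hey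
    refine ⟨e, he, m, ?_, rfl⟩
    simpa using H.sub_mem hy he.1
  · rintro ⟨e, he, m, hm, rfl⟩
    simpa [add_sub_right_comm] using H.add_mem he.1 hm

theorem exists_finset_setOf_sub_mem_eq_add_closure [IsOrderedCancelAddMonoid α]
    [WellQuasiOrderedLE α] (f : α →+ G) (H : AddSubgroup G) (b : G) :
    ∃ E R : Finset α,
      {y | f y - b ∈ H} = (E : Set α) + AddSubmonoid.closure (R : Set α) := by
  classical
  obtain ⟨R, hR⟩ := AddSubgroup.fg_comap_toAddSubmonoid f H
  have hE := WellQuasiOrderedLE.finite_of_isAntichain (setOfPred_minimal_antichain (f · - b ∈ H))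
  exact ⟨hE.toFinset, R, by rw [hE.coe_toFinset, hR, setOf_sub_mem_eq_minimal_add_comap]⟩

end CosetPreimage

theorem AddSubmonoid.coe_finset_add_closure_finset_eq {M : Type*} [AddCommMonoid M]
    (E R : Finset M) :
    (E : Set M) + closure (R : Set M) = {y | ∃ e ∈ E, ∃ c : M → ℕ, y = e + ∑ r ∈ R, c r • r} := by
  classical
  ext y
  simp only [Set.mem_add, SetLike.mem_coe, mem_closure_finset, Set.mem_ofPred_eq]
  constructor
  · rintro ⟨e, he, _, ⟨c, -, rfl⟩, rfl⟩
    exact ⟨e, he, c, rfl⟩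
  · rintro ⟨e, he, c, rfl⟩
    refine ⟨e, he, _, ⟨fun r => if r ∈ R then c r else 0, ?_, ?_⟩, rfl⟩
    · simp +contextual
    · exact Finset.sum_congr rfl fun r hr => by simp [hr]

/-- Let `Y = {y ∈ ℤ^d₊ : Ay ∈ b + ℤ^n}` for a real matrix `A` and `b ∈ ℝ^n`.
Then there exist finite sets `E, R ⊆ ℤ^d₊` with `Y = E + integ.cone(R)`. -/
theorem stmt12 (n d : ℕ) (A : Matrix (Fin n) (Fin d) ℝ) (b : Fin n → ℝ) :
    ∃ E R : Finset (Fin d → ℕ),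
      {y : Fin d → ℕ | ∃ z : Fin n → ℤ,
          A.mulVec (fun j => (y j : ℝ)) = b + fun i => (z i : ℝ)} =
      {y : Fin d → ℕ | ∃ e ∈ E, ∃ c : (Fin d → ℕ) → ℕ,
          y = e + ∑ r ∈ R, c r • r} := by
  let f : (Fin d → ℕ) →+ (Fin n → ℝ) :=
    A.mulVecLin.toAddMonoidHom.comp ((Nat.castAddMonoidHom ℝ).compLeft (Fin d))
  let H : AddSubgroup (Fin n → ℝ) := ((Int.castAddHom ℝ).compLeft (Fin n)).range
  obtain ⟨E, R, hY⟩ := exists_finset_setOf_sub_mem_eq_add_closure f H b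
  refine ⟨E, R, ?_⟩
  rw [← AddSubmonoid.coe_finset_add_closure_finset_eq, ← hY]
  ext y
  simp only [f, H, Set.mem_ofPred_eq, AddMonoidHom.mem_range, eq_sub_iff_add_eq, add_comm]
  exact exists_congr fun _ => eq_comm
end

section
/- Let θ : R^n → R be an additive function (θ(u+v) = θ(u)+θ(v)) vanishing on Q^n, let P ⊆ R^n be finite, and let p_1,…,p_k ∈ P be a maximal subset such that {p_1,…,p_k} ∪ {e_1,…,e_n} is linearly independent over Q. Then there exist real numbers λ_1,…,λ_k such that θ(p) = Σ_{i=1}^k λ_i θ_i(p) for every p ∈ P, where θ_i are additive functions vanishing on Q^n with θ_i(p_j) = δ_{ij}, and moreover θ_i(p) ∈ Q for all p ∈ P. -/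
/-! Extend `p₁, …, p_k, e₁, …, e_n` to a `ℚ`-basis of `ℝⁿ` and let `θᵢ` be the `pᵢ`-coordinate.
An `x ∈ P` is `q̄ + ∑ qᵢ pᵢ` with `q̄ ∈ ℚⁿ`, so `θᵢ x = qᵢ ∈ ℚ`, and since `θ` is `ℚ`-linear and kills
`q̄`, `θ x = ∑ θ(pᵢ) θᵢ(x)`: take `λᵢ = θ(pᵢ)`. -/

open Module

theorem Module.Basis.sumExtend_apply_inl {ι K V : Type*} [DivisionRing K] [AddCommGroup V]
    [Module K V] {v : ι → V} (hv : LinearIndependent K v) (i : ι) :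
    Basis.sumExtend hv (.inl i) = v i := by
  simp only [Basis.sumExtend, Basis.reindex_apply, Basis.extend_apply_self]
  rfl

theorem LinearIndependent.exists_dual_apply_eq_ite {ι K V : Type*} [DecidableEq ι] [Field K]
    [AddCommGroup V] [Module K V] {v : ι → V} (hv : LinearIndependent K v) :
    ∃ f : ι → Dual K V, ∀ i j, f i (v j) = if i = j then 1 else 0 := by
  classical
  refine ⟨fun i => (Basis.sumExtend hv).coord (.inl i), fun i j => ?_⟩
  rw [Basis.coord_apply, ← Basis.sumExtend_apply_inl hv, Basis.repr_self, Finsupp.single_apply]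
  simp [eq_comm]

theorem LinearMap.map_add_sum_ratCast_smul {ι V M : Type*} [Fintype ι] [AddCommGroup V]
    [Module ℝ V] [Module ℚ V] [AddCommGroup M] [Module ℚ M] (φ : V →ₗ[ℚ] M) {w : V}
    (hw : φ w = 0) (q : ι → ℚ) (p : ι → V) :
    φ (w + ∑ i, (q i : ℝ) • p i) = ∑ i, q i • φ (p i) := by
  simp only [map_add, hw, zero_add, map_sum, Rat.cast_smul_eq_qsmul, map_smul]

theorem ratCast_vec_eq_sum_smul_single {n : ℕ} (c : Fin n → ℚ) :
    (fun j => (c j : ℝ)) = ∑ j, c j • (Pi.single j 1 : Fin n → ℝ) := by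
  ext i
  simp [Finset.sum_apply, Pi.single_apply, Rat.smul_def]

theorem linearIndependent_sumElim_single {n k : ℕ} {p : Fin k → Fin n → ℝ}
    (hindep : ∀ (q : Fin k → ℚ) (c : Fin n → ℚ),
      ((∑ i, (q i : ℝ) • p i) + fun j => (c j : ℝ)) = 0 → q = 0 ∧ c = 0) :
    LinearIndependent ℚ (Sum.elim p fun j => (Pi.single j 1 : Fin n → ℝ)) := by
  rw [Fintype.linearIndependent_iff]
  intro g hg
  rw [Fintype.sum_sum_type] at hg
  obtain ⟨hq, hc⟩ := hindep (g ∘ .inl) (g ∘ .inr) <| by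
    simpa [ratCast_vec_eq_sum_smul_single, Rat.cast_smul_eq_qsmul] using hg
  rintro (i | j)
  exacts [congrFun hq i, congrFun hc j]

theorem stmt16_general (n k : ℕ) (θ : (Fin n → ℝ) → ℝ)
    (hadd : ∀ u v, θ (u + v) = θ u + θ v)
    (hrat : ∀ q : Fin n → ℚ, θ (fun i => (q i : ℝ)) = 0)
    (P : Finset (Fin n → ℝ)) (p : Fin k → Fin n → ℝ)
    (hindep : ∀ (q : Fin k → ℚ) (c : Fin n → ℚ),
      ((∑ i, (q i : ℝ) • p i) + fun j => (c j : ℝ)) = 0 → q = 0 ∧ c = 0)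
    (hmax : ∀ x ∈ P, ∃ (q : Fin k → ℚ) (c : Fin n → ℚ),
      x = (fun j => (c j : ℝ)) + ∑ i, (q i : ℝ) • p i) :
    ∃ (Θ : Fin k → ((Fin n → ℝ) → ℝ)) (l : Fin k → ℝ),
      (∀ i, ∀ u v, Θ i (u + v) = Θ i u + Θ i v) ∧
      (∀ i, ∀ q : Fin n → ℚ, Θ i (fun j => (q j : ℝ)) = 0) ∧
      (∀ i j, Θ i (p j) = if i = j then 1 else 0) ∧
      (∀ i, ∀ x ∈ P, ∃ q : ℚ, Θ i x = (q : ℝ)) ∧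
      (∀ x ∈ P, θ x = ∑ i, l i * Θ i x) := by
  obtain ⟨f, hf⟩ := (linearIndependent_sumElim_single hindep).exists_dual_apply_eq_ite
  have hfp (i j : Fin k) : f (.inl i) (p j) = if i = j then 1 else 0 := by
    simpa using hf (.inl i) (.inl j)
  have hfe (i : Fin k) (j : Fin n) : f (.inl i) (Pi.single j 1) = 0 := by
    simpa using hf (.inl i) (.inr j)
  have hf_ratCast (i : Fin k) (c : Fin n → ℚ) : f (.inl i) (fun j => (c j : ℝ)) = 0 := by
    simp [ratCast_vec_eq_sum_smul_single, hfe]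
  have hf_decomp (i : Fin k) (q : Fin k → ℚ) (c : Fin n → ℚ) :
      f (.inl i) ((fun j => (c j : ℝ)) + ∑ j, (q j : ℝ) • p j) = q i := by
    rw [(f (.inl i)).map_add_sum_ratCast_smul (hf_ratCast i c)]
    simp [hfp]
  refine ⟨fun i x => f (.inl i) x, fun i => θ (p i), fun i u v => by simp,
    fun i c => by simp [hf_ratCast], fun i j => by simp [hfp, apply_ite (Rat.cast : ℚ → ℝ)],
    fun i x _ => ⟨_, rfl⟩, fun x hx => ?_⟩
  obtain ⟨q, c, rfl⟩ := hmax x hx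
  have hθ : θ _ = ∑ i, q i • θ (p i) :=
    (AddMonoidHom.mk' θ hadd).toRatLinearMap.map_add_sum_ratCast_smul (hrat c) q p
  simp [hθ, hf_decomp, Rat.smul_def, mul_comm]

/-- Let `θ : ℝ^n → ℝ` be additive and vanishing on `ℚ^n`, let `P ⊆ ℝ^n` be
finite and `p₁, …, p_k ∈ P` a maximal subset such that `{p₁,…,p_k} ∪ {e₁,…,e_n}`
is linearly independent over `ℚ`. Then there exist additive functions
`θ₁, …, θ_k` vanishing on `ℚ^n` with `θᵢ(p_j) = δᵢⱼ`, taking rational values on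
`P`, and reals `λ₁,…,λ_k` such that `θ(p) = ∑ᵢ λᵢ θᵢ(p)` for all `p ∈ P`. -/
theorem stmt16 (n k : ℕ) (θ : (Fin n → ℝ) → ℝ)
    (hadd : ∀ u v, θ (u + v) = θ u + θ v)
    (hrat : ∀ q : Fin n → ℚ, θ (fun i => (q i : ℝ)) = 0)
    (P : Finset (Fin n → ℝ)) (p : Fin k → Fin n → ℝ) (hpP : ∀ i, p i ∈ P)
    (hindep : ∀ (q : Fin k → ℚ) (c : Fin n → ℚ),
      ((∑ i, (q i : ℝ) • p i) + fun j => (c j : ℝ)) = 0 → q = 0 ∧ c = 0)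
    (hmax : ∀ x ∈ P, ∃ (q : Fin k → ℚ) (c : Fin n → ℚ),
      x = (fun j => (c j : ℝ)) + ∑ i, (q i : ℝ) • p i) :
    ∃ (Θ : Fin k → ((Fin n → ℝ) → ℝ)) (l : Fin k → ℝ),
      (∀ i, ∀ u v, Θ i (u + v) = Θ i u + Θ i v) ∧
      (∀ i, ∀ q : Fin n → ℚ, Θ i (fun j => (q j : ℝ)) = 0) ∧
      (∀ i j, Θ i (p j) = if i = j then 1 else 0) ∧
      (∀ i, ∀ x ∈ P, ∃ q : ℚ, Θ i x = (q : ℝ)) ∧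
      (∀ x ∈ P, θ x = ∑ i, l i * Θ i x) :=
  stmt16_general n k θ hadd hrat P p hindep hmax
end
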